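/- The graphs K₄ ∪ P₃ and K₂ ∪ K₂ ∪ P₃ are locally equienergetic: e(K₄ ∪ P₃) = e(K₂ ∪ K₂ ∪ P₃). -/

import Mathlib

open SimpleGraph Matrix Finset

noncomputable section

/-- The adjacency matrix of a simple graph over `ℝ` is Hermitian. -/
lemma adjMatrix_isHermitian {V : Type*} [Fintype V] (G : SimpleGraph V)
    [DecidableRel G.Adj] : (G.adjMatrix ℝ).IsHermitian := by
  rw [Matrix.IsHermitian, Matrix.conjTranspose_eq_transpose_of_trivial]
  exact G.isSymm_adjMatrix

/-- The energy of a finite simple graph: the sum of the absolute values of the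
eigenvalues of its adjacency matrix. -/
def graphEnergy {V : Type*} [Fintype V] [DecidableEq V] (G : SimpleGraph V) : ℝ :=
  letI := Classical.decRel G.Adj
  ∑ i, |(adjMatrix_isHermitian G).eigenvalues i|

/-- The local energy of `G` at a vertex `v`: the energy of `G` minus the energy of the
induced subgraph obtained by deleting `v`. -/
def localEnergyAt {V : Type*} [Fintype V] [DecidableEq V] (G : SimpleGraph V) (v : V) : ℝ :=
  graphEnergy G - graphEnergy (G.induce {u | u ≠ v})

/-- The local energy of `G`: the sum of the local energies at all vertices. -/
def localEnergy {V : Type*} [Fintype V] [DecidableEq V] (G : SimpleGraph V) : ℝ :=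
  ∑ v, localEnergyAt G v

end

/-!
Local energy is additive over disjoint unions: deleting a vertex of one component leaves the
energy of the other unchanged. So the claim reduces to `e(K₄) = e(K₂) + e(K₂)`. The adjacency
matrix `A = J - I` of `Kₙ` satisfies `A² = (n - 2) A + (n - 1) I`, so its eigenvalues lie in
`{n - 1, -1}`; as they sum to `tr A = 0`, `E(Kₙ) = 2(n - 1)` and hence `e(Kₙ) = 2n`.
-/

open Polynomial

lemma Matrix.IsHermitian.eval_eigenvalues_eq_zero {n : Type*} [Fintype n] [DecidableEq n]
    {A : Matrix n n ℝ} (hA : A.IsHermitian) {p : ℝ[X]} (hp : aeval A p = 0) (i : n) :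
    p.eval (hA.eigenvalues i) = 0 := by
  have : Nonempty n := ⟨i⟩
  have := spectrum.subset_polynomial_aeval A p ⟨_, hA.eigenvalues_mem_spectrum_real i, rfl⟩
  rwa [hp, spectrum.zero_eq, Set.mem_singleton_iff] at this

namespace SimpleGraph

section induceSum

variable {V W : Type*}

def induceSumInlIso (G : SimpleGraph V) (H : SimpleGraph W) (v : V) :
    (G ⊕g H).induce {u | u ≠ .inl v} ≃g G.induce {u | u ≠ v} ⊕g H where
  toEquiv := Equiv.subtypeSum.trans <|
    Equiv.sumCongr (Equiv.subtypeEquivRight fun _ => Sum.inl_injective.ne_iff)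
      (Equiv.subtypeUnivEquiv fun _ => Sum.inr_ne_inl)
  map_rel_iff' := by
    rintro ⟨a | a, _⟩ ⟨b | b, _⟩ <;> simp [Equiv.subtypeSum]

def induceSumInrIso (G : SimpleGraph V) (H : SimpleGraph W) (w : W) :
    (G ⊕g H).induce {u | u ≠ .inr w} ≃g G ⊕g H.induce {u | u ≠ w} where
  toEquiv := Equiv.subtypeSum.trans <|
    Equiv.sumCongr (Equiv.subtypeUnivEquiv fun _ => Sum.inl_ne_inr)
      (Equiv.subtypeEquivRight fun _ => Sum.inr_injective.ne_iff)
  map_rel_iff' := by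
    rintro ⟨a | a, _⟩ ⟨b | b, _⟩ <;> simp [Equiv.subtypeSum]

end induceSum

variable {V W : Type*} [Fintype V] [DecidableEq V] [Fintype W] [DecidableEq W]

lemma graphEnergy_eq_sum_abs_eigenvalues (G : SimpleGraph V) [DecidableRel G.Adj] :
    graphEnergy G = ∑ i, |(adjMatrix_isHermitian G).eigenvalues i| := by
  rw [graphEnergy]
  congr!

lemma graphEnergy_eq_sum_abs_roots (G : SimpleGraph V) [DecidableRel G.Adj] :
    graphEnergy G = (((G.adjMatrix ℝ).charpoly.roots).map (|·|)).sum := by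
  rw [graphEnergy_eq_sum_abs_eigenvalues, (adjMatrix_isHermitian G).roots_charpoly_eq_eigenvalues,
    Multiset.map_map]
  rfl

lemma graphEnergy_congr {G : SimpleGraph V} {H : SimpleGraph W} (e : G ≃g H) :
    graphEnergy G = graphEnergy H := by
  classical
  have hA : (G.adjMatrix ℝ).reindex e e = H.adjMatrix ℝ := by
    ext i j
    simp [adjMatrix_apply, ← e.map_adj_iff]
  rw [graphEnergy_eq_sum_abs_roots, graphEnergy_eq_sum_abs_roots, ← hA, charpoly_reindex]

lemma graphEnergy_sum (G : SimpleGraph V) (H : SimpleGraph W) :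
    graphEnergy (G ⊕g H) = graphEnergy G + graphEnergy H := by
  classical
  have hA : (G ⊕g H).adjMatrix ℝ = fromBlocks (G.adjMatrix ℝ) 0 0 (H.adjMatrix ℝ) := by
    ext (i | i) (j | j) <;> simp [adjMatrix_apply]
  rw [graphEnergy_eq_sum_abs_roots, graphEnergy_eq_sum_abs_roots, graphEnergy_eq_sum_abs_roots, hA,
    charpoly_fromBlocks_zero₁₂, roots_mul ((charpoly_monic _).mul (charpoly_monic _)).ne_zero,
    Multiset.map_add, Multiset.sum_add]

lemma localEnergyAt_sum_inl (G : SimpleGraph V) (H : SimpleGraph W) (v : V) :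
    localEnergyAt (G ⊕g H) (.inl v) = localEnergyAt G v := by
  rw [localEnergyAt, localEnergyAt, graphEnergy_congr (induceSumInlIso G H v), graphEnergy_sum,
    graphEnergy_sum]
  ring

lemma localEnergyAt_sum_inr (G : SimpleGraph V) (H : SimpleGraph W) (w : W) :
    localEnergyAt (G ⊕g H) (.inr w) = localEnergyAt H w := by
  rw [localEnergyAt, localEnergyAt, graphEnergy_congr (induceSumInrIso G H w), graphEnergy_sum,
    graphEnergy_sum]
  ring

lemma localEnergy_sum (G : SimpleGraph V) (H : SimpleGraph W) :
    localEnergy (G ⊕g H) = localEnergy G + localEnergy H := by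
  simp only [localEnergy, Fintype.sum_sum_type, localEnergyAt_sum_inl, localEnergyAt_sum_inr]

lemma adjMatrix_top_mul_self {α : Type*} [CommRing α] [DecidableRel (⊤ : SimpleGraph V).Adj] :
    (⊤ : SimpleGraph V).adjMatrix α * (⊤ : SimpleGraph V).adjMatrix α =
      ((Fintype.card V : α) - 2) • (⊤ : SimpleGraph V).adjMatrix α +
        ((Fintype.card V : α) - 1) • 1 := by
  have hA : (⊤ : SimpleGraph V).adjMatrix α = of 1 - 1 := by
    ext i j
    by_cases h : i = j <;> simp [adjMatrix_apply, one_apply, h]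
  have hJ : (of 1 : Matrix V V α) * of 1 = (Fintype.card V : α) • of 1 := by
    ext i j
    simp [mul_apply]
  rw [hA, sub_mul, mul_sub, mul_sub, hJ, one_mul, mul_one, mul_one]
  module

lemma graphEnergy_top [Nonempty V] :
    graphEnergy (⊤ : SimpleGraph V) = 2 * ((Fintype.card V : ℝ) - 1) := by
  set n : ℝ := (Fintype.card V : ℝ)
  have hn : 1 ≤ n := Nat.one_le_cast.2 Fintype.card_pos
  rw [graphEnergy_eq_sum_abs_eigenvalues]
  set hA := adjMatrix_isHermitian (⊤ : SimpleGraph V)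
  have hroot (i : V) : (hA.eigenvalues i - (n - 1)) * (hA.eigenvalues i + 1) = 0 := by
    have := hA.eval_eigenvalues_eq_zero (p := X ^ 2 - C (n - 2) * X - C (n - 1)) ?_ i
    · simp only [eval_sub, eval_pow, eval_X, eval_mul, eval_C] at this
      linear_combination this
    · rw [map_sub, map_sub, map_mul, aeval_X_pow, aeval_X, aeval_C, aeval_C,
        Algebra.algebraMap_eq_smul_one, Algebra.algebraMap_eq_smul_one, smul_one_mul, sq,
        adjMatrix_top_mul_self]
      abel
  -- `|λ|` agrees on the two eigenvalues `n - 1` and `-1` with the affine function below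
  have habs (i : V) : n * |hA.eigenvalues i| = (n - 2) * hA.eigenvalues i + 2 * (n - 1) := by
    rcases mul_eq_zero.1 (hroot i) with h | h
    · rw [sub_eq_zero.1 h, abs_of_nonneg (by linarith)]; ring
    · rw [eq_neg_of_add_eq_zero_left h, abs_neg, abs_one]; ring
  have htrace : ∑ i, hA.eigenvalues i = 0 := by
    have := hA.trace_eq_sum_eigenvalues
    rw [trace_adjMatrix] at this
    simpa using this.symm
  have : n * ∑ i, |hA.eigenvalues i| = n * (2 * (n - 1)) := by
    rw [mul_sum, sum_congr rfl fun i _ => habs i, sum_add_distrib, ← mul_sum, htrace, sum_const,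
      card_univ, nsmul_eq_mul]
    ring
  exact mul_left_cancel₀ (show n ≠ 0 by positivity) this

lemma localEnergyAt_top (hV : 2 ≤ Fintype.card V) (v : V) :
    localEnergyAt (⊤ : SimpleGraph V) v = 2 := by
  have hcard : Fintype.card {u // u ∈ {u | u ≠ v}} = Fintype.card V - 1 := by
    simp [Fintype.card_subtype_compl]
  have : Nonempty V := ⟨v⟩
  have : Nonempty {u // u ∈ {u | u ≠ v}} := Fintype.card_pos_iff.1 (by omega)
  rw [localEnergyAt, induce_top, graphEnergy_top, graphEnergy_top, hcard, Nat.cast_sub (by omega)]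
  ring

lemma localEnergy_top (hV : 2 ≤ Fintype.card V) :
    localEnergy (⊤ : SimpleGraph V) = 2 * Fintype.card V := by
  simp [localEnergy, localEnergyAt_top hV, mul_comm]

end SimpleGraph

/-- `e(K₄ ∪ P₃) = e(K₂ ∪ K₂ ∪ P₃)`. -/
theorem localEnergy_K4_P3 :
    localEnergy ((⊤ : SimpleGraph (Fin 4)) ⊕g pathGraph 3) =
      localEnergy (((⊤ : SimpleGraph (Fin 2)) ⊕g (⊤ : SimpleGraph (Fin 2)))
        ⊕g pathGraph 3) := by
  rw [localEnergy_sum, localEnergy_sum, localEnergy_sum, localEnergy_top (by simp),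
    localEnergy_top (by simp)]
  norm_num
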